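/- Let (X,T) be a TDS and μ a T-invariant ergodic Borel probability measure on X, and suppose there exists a Borel set M ⊆ X with μ(M) = 1 such that ρ_FK(x,y) = 0 for every x,y ∈ M. Then for every k ≥ 1, every finite Borel partition P = {P_0,…,P_{k−1}} of X, and every ε > 0, there exists N ∈ ℕ such that for every n ≥ N there is a word w ∈ {0,…,k−1}^n with μ({x ∈ X : f̄_n(w, P^n(x)) < ε}) ≥ 1 − ε. -/

import Mathlib

open Filter Topology MeasureTheory Set

namespace FKPaper

variable {X : Type*} [MetricSpace X]

/-- The maximal fit of an `(n,δ)`-match between the orbits of `x` and `z` under `T`: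
the largest cardinality of the domain of an order-preserving bijection
`π : D → R`, with `D, R ⊆ {0,…,n-1}` and `dist (T^[i] x) (T^[π i] z) < δ` for `i ∈ D`. -/
noncomputable def maxFit (T : X → X) (δ : ℝ) (n : ℕ) (x z : X) : ℕ :=
  sSup {k : ℕ | ∃ i j : Fin k → ℕ, StrictMono i ∧ StrictMono j ∧
    (∀ s, i s < n) ∧ (∀ s, j s < n) ∧ ∀ s, dist (T^[i s] x) (T^[j s] z) < δ}

/-- `f̄_{n,δ}(x,z) = 1 - (maximal fit of an (n,δ)-match of x and z)/n`. -/
noncomputable def fbarN (T : X → X) (δ : ℝ) (n : ℕ) (x z : X) : ℝ :=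
  1 - (maxFit T δ n x z : ℝ) / n

/-- `f̄_δ(x,z) = limsup_{n→∞} f̄_{n,δ}(x,z)`. -/
noncomputable def fbar (T : X → X) (δ : ℝ) (x z : X) : ℝ :=
  Filter.limsup (fun n => fbarN T δ n x z) Filter.atTop

/-- The Feldman–Katok pseudometric `ρ_FK(x,z) = inf {δ > 0 : f̄_δ(x,z) < δ}`. -/
noncomputable def rhoFK (T : X → X) (x z : X) : ℝ :=
  sInf {δ : ℝ | 0 < δ ∧ fbar T δ x z < δ}

/-- Largest `ℓ` such that the words `u` and `w` admit a common subsequence of length `ℓ`. -/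
noncomputable def maxCommon {A : Type*} (n : ℕ) (u w : Fin n → A) : ℕ :=
  sSup {ℓ : ℕ | ∃ i : Fin ℓ → Fin n, ∃ j : Fin ℓ → Fin n, StrictMono i ∧ StrictMono j ∧
      ∀ s, u (i s) = w (j s)}

/-- The edit distance `f̄_n(u,w) = 1 - (length of longest common subsequence)/n`. -/
noncomputable def editDist {A : Type*} (n : ℕ) (u w : Fin n → A) : ℝ :=
  1 - (maxCommon n u w : ℝ) / n

/-- The `P`-`n`-name of a point `x`, for an ordered Borel partition into `k` atoms
identified with a map `P : X → Fin k`. -/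
def pName (T : X → X) {k : ℕ} (P : X → Fin k) (n : ℕ) (x : X) : Fin n → Fin k :=
  fun j => P (T^[(j : ℕ)] x)

end FKPaper

/-!
If `ρ_FK` vanishes on a set of full measure, then for every `δ > 0` a `μ × μ`-typical pair of
points `(y, x)` has, for all large `n`, an `(n, δ)`-match of fit at least `(1 - δ) n`. Approximate
the atoms of `P` from inside by compact sets; these lie at positive mutual distance, so on their
union `K` points closer than some `δ₀` carry the same label. By invariance and Markov's inequality
a typical orbit spends at most a `γ`-fraction of the times `m < n` outside `K`. Discarding the
matched pairs of times at which one of the two orbits is outside `K` leaves a common subsequence of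
the two `P`-`n`-names of length at least `(1 - δ - 2γ) n`. Hence the edit distance between the
names of `y` and `x` is small for most pairs, and by Fubini some `y` works for most `x`; its name
is the word `w`.
-/

open Filter Topology MeasureTheory Set Function
open scoped ENNReal Finset

theorem MeasureTheory.MeasurePreserving.lintegral_birkhoffSum {α : Type*} [MeasurableSpace α]
    {μ : Measure α} {f : α → α} (hf : MeasurePreserving f μ μ) {g : α → ℝ≥0∞}
    (hg : Measurable g) (n : ℕ) :
    ∫⁻ x, birkhoffSum f g n x ∂μ = n * ∫⁻ x, g x ∂μ := by
  simp only [birkhoffSum]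
  rw [lintegral_finsetSum (f := fun k x => g (f^[k] x)) _
    fun k _ => hg.comp (hf.iterate k).measurable]
  simp [(hf.iterate _).lintegral_comp hg]

theorem MeasureTheory.tendsto_measure_compl_of_forall_mem_eventually {α : Type*}
    [MeasurableSpace α] {ν : Measure α} [IsProbabilityMeasure ν] {G : ℕ → Set α}
    (hG : ∀ n, MeasurableSet (G n)) {A : Set α} (hA : ν A = 1)
    (hAG : ∀ p ∈ A, ∀ᶠ n in atTop, p ∈ G n) :
    Tendsto (fun n => ν (G n)ᶜ) atTop (𝓝 0) := by
  let E : ℕ → Set α := fun N => ⋂ m ≥ N, G m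
  have hE : Monotone E := fun N N' h => iInter₂_mono' fun m hm => ⟨m, h.trans hm, subset_rfl⟩
  have hEmeas : ∀ N, MeasurableSet (E N) := fun N => .iInter fun m => .iInter fun _ => hG m
  have hU : ν (⋃ N, E N) = 1 := by
    refine le_antisymm prob_le_one (hA ▸ measure_mono fun p hp => ?_)
    obtain ⟨N, hN⟩ := eventually_atTop.1 (hAG p hp)
    exact mem_iUnion.2 ⟨N, mem_iInter₂.2 hN⟩
  have hlim : Tendsto (fun N => ν (E N)ᶜ) atTop (𝓝 0) := by
    have h := tendsto_measure_iUnion_atTop (μ := ν) hE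
    rw [hU] at h
    simp_rw [prob_compl_eq_one_sub (hEmeas _)]
    simpa using ENNReal.Tendsto.sub tendsto_const_nhds h (Or.inl ENNReal.one_ne_top)
  exact tendsto_of_tendsto_of_tendsto_of_le_of_le tendsto_const_nhds hlim (fun _ => zero_le)
    fun n => measure_mono (compl_subset_compl.2 (iInter₂_subset n le_rfl))

theorem MeasureTheory.Measure.exists_prod_le_measure_preimage_prodMk {α β : Type*}
    [MeasurableSpace α] [MeasurableSpace β] (μ : Measure α) [IsProbabilityMeasure μ]
    (ν : Measure β) [IsFiniteMeasure ν] {D : Set (α × β)} (hD : MeasurableSet D) :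
    ∃ y, μ.prod ν D ≤ ν (Prod.mk y ⁻¹' D) := by
  have h := measure_ne_top (μ.prod ν) D
  rw [Measure.prod_apply hD] at h ⊢
  exact exists_lintegral_le h

namespace FKPaper

section Matches

variable {X : Type*} [MetricSpace X] {T : X → X} {δ : ℝ} {n r : ℕ} {x z : X}

def HasMatch (T : X → X) (δ : ℝ) (n : ℕ) (x z : X) (r : ℕ) : Prop :=
  ∃ i j : Fin r → ℕ, StrictMono i ∧ StrictMono j ∧
    (∀ s, i s < n) ∧ (∀ s, j s < n) ∧ ∀ s, dist (T^[i s] x) (T^[j s] z) < δ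

lemma hasMatch_zero : HasMatch T δ n x z 0 :=
  ⟨Fin.elim0, Fin.elim0, fun s => s.elim0, fun s => s.elim0, fun s => s.elim0,
    fun s => s.elim0, fun s => s.elim0⟩

lemma HasMatch.le (h : HasMatch T δ n x z r) : r ≤ n := by
  obtain ⟨i, -, hi, -, hin, -⟩ := h
  simpa using Fintype.card_le_of_injective (fun s => (⟨i s, hin s⟩ : Fin n))
    fun a b hab => hi.injective (Fin.ext_iff.1 hab)

lemma HasMatch.mono {δ' : ℝ} (h : HasMatch T δ n x z r) (hδ : δ ≤ δ') :
    HasMatch T δ' n x z r := by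
  obtain ⟨i, j, hi, hj, hin, hjn, hd⟩ := h
  exact ⟨i, j, hi, hj, hin, hjn, fun s => (hd s).trans_le hδ⟩

lemma bddAbove_hasMatch : BddAbove {r | HasMatch T δ n x z r} :=
  ⟨n, fun _ h => h.le⟩

lemma hasMatch_maxFit : HasMatch T δ n x z (maxFit T δ n x z) :=
  Nat.sSup_mem ⟨0, hasMatch_zero⟩ bddAbove_hasMatch

lemma le_maxFit_iff : r ≤ maxFit T δ n x z ↔ HasMatch T δ n x z r := by
  refine ⟨fun hr => ?_, fun h => le_csSup bddAbove_hasMatch h⟩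
  obtain ⟨i, j, hi, hj, hin, hjn, hd⟩ : HasMatch T δ n x z (maxFit T δ n x z) := hasMatch_maxFit
  exact ⟨i ∘ Fin.castLE hr, j ∘ Fin.castLE hr, hi.comp (Fin.strictMono_castLE hr),
    hj.comp (Fin.strictMono_castLE hr), fun s => hin _, fun s => hjn _, fun s => hd _⟩

lemma maxFit_le : maxFit T δ n x z ≤ n :=
  hasMatch_maxFit.le

lemma maxFit_mono {δ' : ℝ} (hδ : δ ≤ δ') : maxFit T δ n x z ≤ maxFit T δ' n x z :=
  le_maxFit_iff.2 (hasMatch_maxFit.mono hδ)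

lemma fbarN_nonneg : 0 ≤ fbarN T δ n x z := by
  rw [fbarN, sub_nonneg]
  exact div_le_one_of_le₀ (by exact_mod_cast maxFit_le) n.cast_nonneg

lemma fbarN_le_one : fbarN T δ n x z ≤ 1 :=
  sub_le_self _ (by positivity)

lemma fbarN_anti {δ' : ℝ} (hδ : δ ≤ δ') : fbarN T δ' n x z ≤ fbarN T δ n x z := by
  unfold fbarN
  gcongr
  exact maxFit_mono hδ

lemma isBoundedUnder_le_fbarN : IsBoundedUnder (· ≤ ·) atTop fun n => fbarN T δ n x z :=
  isBoundedUnder_of_eventually_le (Eventually.of_forall fun _ => fbarN_le_one)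

lemma isCoboundedUnder_le_fbarN : IsCoboundedUnder (· ≤ ·) atTop fun n => fbarN T δ n x z :=
  isCoboundedUnder_le_of_le atTop fun _ => fbarN_nonneg

lemma fbar_le_one : fbar T δ x z ≤ 1 :=
  limsup_le_of_le isCoboundedUnder_le_fbarN (Eventually.of_forall fun _ => fbarN_le_one)

lemma fbar_anti {δ' : ℝ} (hδ : δ ≤ δ') : fbar T δ' x z ≤ fbar T δ x z :=
  limsup_le_limsup (Eventually.of_forall fun _ => fbarN_anti hδ) isCoboundedUnder_le_fbarN
    isBoundedUnder_le_fbarN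

lemma eventually_fbarN_lt_of_rhoFK_eq_zero (h : rhoFK T x z = 0) (hδ : 0 < δ) :
    ∀ᶠ n in atTop, fbarN T δ n x z < δ := by
  -- `sInf ∅ = 0` in `ℝ`, so the vanishing of `rhoFK` says nothing until the set is nonempty.
  have hne : (2 : ℝ) ∈ {δ | 0 < δ ∧ fbar T δ x z < δ} :=
    ⟨two_pos, fbar_le_one.trans_lt one_lt_two⟩
  obtain ⟨δ', ⟨-, hδ'⟩, hδ'δ⟩ := (csInf_lt_iff ⟨0, fun _ h => h.1.le⟩ ⟨2, hne⟩).1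
    (show rhoFK T x z < δ by rwa [h])
  exact eventually_lt_of_limsup_lt ((fbar_anti hδ'δ.le).trans_lt (hδ'.trans hδ'δ))
    isBoundedUnder_le_fbarN

lemma lowerSemicontinuous_maxFit (hT : Continuous T) :
    LowerSemicontinuous fun p : X × X => maxFit T δ n p.1 p.2 := by
  refine lowerSemicontinuous_iff_isOpen_preimage.2 fun r => isOpen_iff_forall_mem_open.2 ?_
  intro p hp
  obtain ⟨i, j, hi, hj, hin, hjn, hd⟩ := le_maxFit_iff.1 (Nat.succ_le_of_lt hp)
  refine ⟨{q | ∀ s, dist (T^[i s] q.1) (T^[j s] q.2) < δ},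
    fun q hq => Nat.lt_of_succ_le (le_maxFit_iff.2 ⟨i, j, hi, hj, hin, hjn, hq⟩), ?_, hd⟩
  simp only [ofPred_forall]
  exact isOpen_iInter_of_finite fun s => isOpen_lt
    (((hT.iterate _).comp continuous_fst).dist ((hT.iterate _).comp continuous_snd))
    continuous_const

lemma measurableSet_setOf_fbarN_lt [MeasurableSpace X] [BorelSpace X]
    [SecondCountableTopology X] (hT : Continuous T) :
    MeasurableSet {p : X × X | fbarN T δ n p.1 p.2 < δ} := by
  have hfit : Measurable fun p : X × X => (maxFit T δ n p.1 p.2 : ℝ) :=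
    measurable_from_top.comp (lowerSemicontinuous_maxFit hT).measurable
  exact measurableSet_lt (measurable_const.sub (hfit.div_const _)) measurable_const

end Matches

lemma le_maxCommon {A : Type*} {n ℓ : ℕ} {u w : Fin n → A} (i j : Fin ℓ → Fin n)
    (hi : StrictMono i) (hj : StrictMono j) (huw : ∀ s, u (i s) = w (j s)) :
    ℓ ≤ maxCommon n u w :=
  le_csSup ⟨n, fun _ ⟨i', _, hi', _⟩ => by
    simpa using Fintype.card_le_of_injective i' hi'.injective⟩ ⟨i, j, hi, hj, huw⟩

section OutsideCount

variable {X : Type*} {T : X → X} {K : Set X}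

noncomputable def outsideCount (T : X → X) (K : Set X) (n : ℕ) (x : X) : ℕ :=
  birkhoffSum T (Kᶜ.indicator 1) n x

lemma outsideCount_eq_card (T : X → X) (K : Set X) (n : ℕ) (x : X) [DecidablePred (· ∈ K)] :
    outsideCount T K n x = #{m ∈ Finset.range n | T^[m] x ∉ K} := by
  simp [outsideCount, birkhoffSum, Set.indicator_apply, Finset.card_filter]

open scoped Classical in
lemma card_filter_notMem_le_outsideCount (T : X → X) (K : Set X) {n r : ℕ}
    {i : Fin r → ℕ} (hi : Function.Injective i) (hin : ∀ s, i s < n) (x : X) :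
    #{s | T^[i s] x ∉ K} ≤ outsideCount T K n x := by
  rw [outsideCount_eq_card]
  exact Finset.card_le_card_of_injOn i (fun s hs => by simp_all) hi.injOn

variable [MeasurableSpace X] {μ : Measure X}

lemma measurable_outsideCount (hT : Measurable T) (hK : MeasurableSet K) (n : ℕ) :
    Measurable (outsideCount T K n) := by
  unfold outsideCount birkhoffSum
  exact Finset.measurable_sum _ fun k _ => (measurable_one.indicator hK.compl).comp (hT.iterate k)

lemma lintegral_outsideCount (hT : MeasurePreserving T μ μ) (hK : MeasurableSet K) (n : ℕ) :
    ∫⁻ x, (outsideCount T K n x : ℝ≥0∞) ∂μ = n * μ Kᶜ := by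
  have hcast : ∀ x, (outsideCount T K n x : ℝ≥0∞) = birkhoffSum T (Kᶜ.indicator 1) n x := by
    intro x
    simp only [outsideCount, birkhoffSum, Nat.cast_sum]
    refine Finset.sum_congr rfl fun m _ => ?_
    by_cases hm : T^[m] x ∈ Kᶜ <;> simp [hm]
  simp_rw [hcast]
  rw [hT.lintegral_birkhoffSum (measurable_one.indicator hK.compl),
    lintegral_indicator_one hK.compl]

lemma measure_le_outsideCount_le (hT : MeasurePreserving T μ μ) (hK : MeasurableSet K) {n : ℕ}
    (hn : n ≠ 0) {γ : ℝ} (hγ : 0 < γ) :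
    μ {x | γ * n ≤ outsideCount T K n x} ≤ μ Kᶜ / ENNReal.ofReal γ := by
  have hmeas : Measurable fun x => (outsideCount T K n x : ℝ≥0∞) :=
    measurable_from_top.comp (measurable_outsideCount hT.measurable hK n)
  calc μ {x | γ * n ≤ outsideCount T K n x}
      ≤ μ {x | ENNReal.ofReal γ * n ≤ outsideCount T K n x} := by
        refine measure_mono fun x hx => ?_
        rw [mem_ofPred_eq, ← ENNReal.ofReal_natCast, ← ENNReal.ofReal_mul hγ.le,
          ← ENNReal.ofReal_natCast]
        exact ENNReal.ofReal_le_ofReal hx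
    _ ≤ (∫⁻ x, (outsideCount T K n x : ℝ≥0∞) ∂μ) / (ENNReal.ofReal γ * n) :=
        meas_ge_le_lintegral_div hmeas.aemeasurable
          (mul_ne_zero (ENNReal.ofReal_pos.2 hγ).ne' (by exact_mod_cast hn))
          (ENNReal.mul_ne_top ENNReal.ofReal_ne_top (ENNReal.natCast_ne_top n))
    _ = μ Kᶜ / ENNReal.ofReal γ := by
        rw [lintegral_outsideCount hT hK, mul_comm (ENNReal.ofReal γ),
          ENNReal.mul_div_mul_left _ _ (by exact_mod_cast hn) (ENNReal.natCast_ne_top n)]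

end OutsideCount

section MeasurableNames

variable {X : Type*} [MeasurableSpace X] {T : X → X} {k : ℕ} {P : X → Fin k}

lemma measurable_pName (hT : Measurable T) (hP : Measurable P) (n : ℕ) :
    Measurable (pName T P n) :=
  measurable_pi_lambda _ fun j => hP.comp (hT.iterate j)

lemma measurableSet_setOf_editDist_pName_lt (hT : Measurable T) (hP : Measurable P) (n : ℕ)
    (ε : ℝ) :
    MeasurableSet {p : X × X | editDist n (pName T P n p.1) (pName T P n p.2) < ε} :=
  ((measurable_pName hT hP n).prodMap (measurable_pName hT hP n))
    (Set.toFinite {q : (Fin n → Fin k) × (Fin n → Fin k) | editDist n q.1 q.2 < ε}).measurableSet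

end MeasurableNames

section EditDistance

variable {X : Type*} [MetricSpace X] {T : X → X} {δ : ℝ} {n k : ℕ} {P : X → Fin k} {K : Set X}

lemma maxFit_le_maxCommon_add (hsep : ∀ a ∈ K, ∀ b ∈ K, dist a b < δ → P a = P b) (x z : X) :
    maxFit T δ n x z ≤ maxCommon n (pName T P n x) (pName T P n z) +
      (outsideCount T K n x + outsideCount T K n z) := by
  classical
  obtain ⟨i, j, hi, hj, hin, hjn, hd⟩ : HasMatch T δ n x z (maxFit T δ n x z) := hasMatch_maxFit
  -- The matched pairs of times at which both orbits lie in `K` carry equal `P`-labels.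
  let S : Finset (Fin (maxFit T δ n x z)) := {s | T^[i s] x ∈ K ∧ T^[j s] z ∈ K}
  have hS : #S ≤ maxCommon n (pName T P n x) (pName T P n z) := by
    let e := S.orderEmbOfFin rfl
    refine le_maxCommon (fun s => ⟨i (e s), hin _⟩) (fun s => ⟨j (e s), hjn _⟩)
      (fun _ _ h => hi (e.strictMono h)) (fun _ _ h => hj (e.strictMono h)) fun s => ?_
    have hs : e s ∈ S := S.orderEmbOfFin_mem rfl s
    simp only [S, Finset.mem_filter] at hs
    exact hsep _ hs.2.1 _ hs.2.2 (hd _)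
  have hcover : Finset.univ ⊆
      S ∪ (({s | T^[i s] x ∉ K} : Finset _) ∪ ({s | T^[j s] z ∉ K} : Finset _)) := by
    intro s
    simp only [S, Finset.mem_union, Finset.mem_filter, Finset.mem_univ, true_and]
    tauto
  calc maxFit T δ n x z = #(Finset.univ : Finset (Fin (maxFit T δ n x z))) := by simp
    _ ≤ #S + (#{s | T^[i s] x ∉ K} + #{s | T^[j s] z ∉ K}) :=
      (Finset.card_le_card hcover).trans <| (Finset.card_union_le _ _).trans <|
        add_le_add le_rfl (Finset.card_union_le _ _)
    _ ≤ _ := add_le_add hS <| add_le_add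
      (card_filter_notMem_le_outsideCount T K hi.injective hin x)
      (card_filter_notMem_le_outsideCount T K hj.injective hjn z)

lemma editDist_pName_le (hsep : ∀ a ∈ K, ∀ b ∈ K, dist a b < δ → P a = P b) (x z : X) :
    editDist n (pName T P n x) (pName T P n z) ≤ fbarN T δ n x z +
      (outsideCount T K n x + outsideCount T K n z : ℝ) / n := by
  have h : (maxFit T δ n x z : ℝ) / n ≤ (maxCommon n (pName T P n x) (pName T P n z) : ℝ) / n +
      (outsideCount T K n x + outsideCount T K n z : ℝ) / n := by
    rw [← add_div]
    gcongr
    exact_mod_cast maxFit_le_maxCommon_add hsep x z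
  rw [editDist, fbarN]
  linarith

lemma editDist_pName_lt {γ : ℝ} (hsep : ∀ a ∈ K, ∀ b ∈ K, dist a b < δ → P a = P b) {x z : X}
    (hfit : fbarN T δ n x z < δ) (hx : (outsideCount T K n x : ℝ) < γ * n)
    (hz : (outsideCount T K n z : ℝ) < γ * n) :
    editDist n (pName T P n x) (pName T P n z) < δ + 2 * γ := by
  have hn : (0 : ℝ) < n := by
    rcases n.eq_zero_or_pos with rfl | hn
    · exact absurd hx (by simp)
    · exact_mod_cast hn
  have h : (outsideCount T K n x + outsideCount T K n z : ℝ) / n < 2 * γ := by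
    rw [div_lt_iff₀ hn]
    linarith
  linarith [editDist_pName_le (T := T) (n := n) hsep x z]

lemma setOf_le_editDist_pName_subset {γ ε : ℝ}
    (hsep : ∀ a ∈ K, ∀ b ∈ K, dist a b < δ → P a = P b) (hε : δ + 2 * γ ≤ ε) :
    {p : X × X | ε ≤ editDist n (pName T P n p.1) (pName T P n p.2)} ⊆
      {p | fbarN T δ n p.1 p.2 < δ}ᶜ ∪ ({x | γ * n ≤ outsideCount T K n x} ×ˢ univ ∪
        univ ×ˢ {x | γ * n ≤ outsideCount T K n x}) := by
  intro p hp
  by_contra hp'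
  simp only [mem_union, mem_compl_iff, mem_prod, mem_univ, and_true, true_and, not_or, not_not,
    mem_ofPred_eq, not_le] at hp'
  exact hp.not_gt ((editDist_pName_lt hsep hp'.1 hp'.2.1 hp'.2.2).trans_le hε)

end EditDistance

section Separation

variable {X : Type*} [MetricSpace X]

lemma exists_pos_forall_dist_lt_imp_eq {ι : Type*} [Finite ι] {C : ι → Set X}
    (hC : ∀ i, IsCompact (C i)) (hdisj : Pairwise (Disjoint on C)) :
    ∃ δ > 0, ∀ i j, ∀ a ∈ C i, ∀ b ∈ C j, dist a b < δ → i = j := by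
  suffices h : ∀ i j, ∀ᶠ δ in 𝓝[>] (0 : ℝ), ∀ a ∈ C i, ∀ b ∈ C j, dist a b < δ → i = j by
    obtain ⟨δ, hδ, hsep⟩ :=
      ((eventually_mem_nhdsWithin (a := (0 : ℝ)) (s := Ioi 0)).and
        (eventually_all.2 fun i => eventually_all.2 (h i))).exists
    exact ⟨δ, hδ, hsep⟩
  intro i j
  rcases eq_or_ne i j with rfl | hij
  · exact Eventually.of_forall fun _ _ _ _ _ _ => rfl
  obtain ⟨d, hd, hdisj'⟩ := (hdisj hij).exists_thickenings (hC i) (hC j).isClosed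
  filter_upwards [Ioo_mem_nhdsGT hd] with δ hδ a ha b hb hab
  exact absurd (Metric.self_subset_thickening hd _ hb) <| disjoint_left.1 hdisj' <|
    Metric.mem_thickening_iff.2 ⟨a, ha, by rw [dist_comm]; exact hab.trans hδ.2⟩

variable [MeasurableSpace X] [BorelSpace X]

lemma exists_isCompact_measure_compl_lt_forall_dist_lt_imp_eq {ι : Type*} [Finite ι]
    [MeasurableSpace ι] [MeasurableSingletonClass ι] {P : X → ι} (hP : Measurable P)
    (μ : Measure X) [IsFiniteMeasure μ] [μ.InnerRegularCompactLTTop] {η : ℝ≥0∞} (hη : η ≠ 0) :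
    ∃ K, IsCompact K ∧ μ Kᶜ < η ∧ ∃ δ > 0, ∀ a ∈ K, ∀ b ∈ K, dist a b < δ → P a = P b := by
  obtain ⟨η', hη'pos, hη'⟩ := ENNReal.exists_pos_sum_of_countable' hη ι
  choose C hCsub hC hCμ using fun i => (hP (measurableSet_singleton i)).exists_isCompact_sdiff_lt
    (measure_ne_top μ _) (hη'pos i).ne'
  obtain ⟨δ, hδ, hsep⟩ := exists_pos_forall_dist_lt_imp_eq hC fun i j hij =>
    ((disjoint_singleton.2 hij).preimage P).mono (hCsub i) (hCsub j)
  refine ⟨⋃ i, C i, isCompact_iUnion hC, ?_, δ, hδ, fun a ha b hb hab => ?_⟩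
  · calc μ (⋃ i, C i)ᶜ ≤ μ (⋃ i, P ⁻¹' {i} \ C i) :=
          measure_mono fun x hx => mem_iUnion.2 ⟨P x, rfl, fun h => hx (mem_iUnion.2 ⟨P x, h⟩)⟩
      _ ≤ ∑' i, μ (P ⁻¹' {i} \ C i) := measure_iUnion_le _
      _ ≤ ∑' i, η' i := ENNReal.tsum_le_tsum fun i => (hCμ i).le
      _ < η := hη'
  · obtain ⟨i, hi⟩ := mem_iUnion.1 ha
    obtain ⟨j, hj⟩ := mem_iUnion.1 hb
    rw [show P a = i from hCsub i hi, show P b = j from hCsub j hj]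
    exact hsep i j a hi b hj hab

end Separation

variable {X : Type*} [MetricSpace X] [MeasurableSpace X] [BorelSpace X] {T : X → X}
  {μ : Measure X} {k : ℕ} {P : X → Fin k}

lemma eventually_measure_prod_le_editDist_le [SecondCountableTopology X] [IsProbabilityMeasure μ]
    [μ.InnerRegularCompactLTTop] (hT : Continuous T) (hTμ : MeasurePreserving T μ μ) {M : Set X}
    (hM1 : μ M = 1) (h0 : ∀ x ∈ M, ∀ y ∈ M, rhoFK T x y = 0) (hP : Measurable P) {ε : ℝ}
    (hε : 0 < ε) :
    ∀ᶠ n in atTop,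
      μ.prod μ {p | ε ≤ editDist n (pName T P n p.1) (pName T P n p.2)} ≤ ENNReal.ofReal ε := by
  obtain ⟨γ, hγ, hγε⟩ : ∃ γ, 0 < γ ∧ 3 * γ < ε := ⟨ε / 4, by positivity, by linarith⟩
  have hγ' : ENNReal.ofReal γ ≠ 0 := (ENNReal.ofReal_pos.2 hγ).ne'
  -- `μ Kᶜ < γ²`: by Markov, an orbit misses `K` more than `γ n` times with probability `< γ`.
  obtain ⟨K, hK, hKμ, δ₀, hδ₀, hsep₀⟩ :=
    exists_isCompact_measure_compl_lt_forall_dist_lt_imp_eq hP μ (mul_ne_zero hγ' hγ')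
  obtain ⟨δ, hδ, hδδ₀, hδγ⟩ : ∃ δ, 0 < δ ∧ δ ≤ δ₀ ∧ δ ≤ γ :=
    ⟨min δ₀ γ, lt_min hδ₀ hγ, min_le_left _ _, min_le_right _ _⟩
  have hsep : ∀ a ∈ K, ∀ b ∈ K, dist a b < δ → P a = P b := fun a ha b hb hab =>
    hsep₀ a ha b hb (hab.trans_le hδδ₀)
  have hmatch : ∀ᶠ n in atTop, μ.prod μ {p | fbarN T δ n p.1 p.2 < δ}ᶜ ≤ ENNReal.ofReal γ :=
    (tendsto_measure_compl_of_forall_mem_eventually (fun n => measurableSet_setOf_fbarN_lt hT)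
      (A := M ×ˢ M) (by rw [Measure.prod_prod, hM1, one_mul]) fun p hp =>
        eventually_fbarN_lt_of_rhoFK_eq_zero (h0 _ hp.1 _ hp.2) hδ).eventually
      (eventually_le_nhds (ENNReal.ofReal_pos.2 hγ))
  filter_upwards [hmatch, eventually_ne_atTop 0] with n hn hn₀
  set Bad := {x | γ * n ≤ outsideCount T K n x}
  have hBad : μ Bad ≤ ENNReal.ofReal γ :=
    (measure_le_outsideCount_le hTμ hK.isClosed.measurableSet hn₀ hγ).trans
      (ENNReal.div_le_of_le_mul hKμ.le)
  calc μ.prod μ {p | ε ≤ editDist n (pName T P n p.1) (pName T P n p.2)}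
      ≤ μ.prod μ ({p | fbarN T δ n p.1 p.2 < δ}ᶜ ∪ (Bad ×ˢ univ ∪ univ ×ˢ Bad)) :=
        measure_mono (setOf_le_editDist_pName_subset hsep (by linarith))
    _ ≤ ENNReal.ofReal γ + (ENNReal.ofReal γ + ENNReal.ofReal γ) := by
        refine (measure_union_le _ _).trans (add_le_add hn ((measure_union_le _ _).trans
          (add_le_add ?_ ?_)))
        · rwa [Measure.prod_prod, measure_univ, mul_one]
        · rwa [Measure.prod_prod, measure_univ, one_mul]
    _ ≤ ENNReal.ofReal ε := by
        rw [← ENNReal.ofReal_add hγ.le hγ.le, ← ENNReal.ofReal_add hγ.le (by positivity)]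
        exact ENNReal.ofReal_le_ofReal (by linarith)

end FKPaper

open FKPaper

theorem katok_criterion_of_rhoFK_null_general {X : Type*} [MetricSpace X] [CompactSpace X]
    (T : X → X) (hT : Continuous T) [MeasurableSpace X] [BorelSpace X]
    (μ : Measure X) [IsProbabilityMeasure μ] (hμ : Ergodic T μ)
    (M : Set X) (hM1 : μ M = 1)
    (h0 : ∀ x ∈ M, ∀ y ∈ M, rhoFK T x y = 0)
    (k : ℕ) (P : X → Fin k) (hP : Measurable P)
    (ε : ℝ) (hε : 0 < ε) :
    ∃ N : ℕ, ∀ n ≥ N, ∃ w : Fin n → Fin k,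
      ENNReal.ofReal (1 - ε) ≤ μ {x : X | editDist n w (pName T P n x) < ε} := by
  obtain ⟨N, hN⟩ := eventually_atTop.1
    (eventually_measure_prod_le_editDist_le hT hμ.toMeasurePreserving hM1 h0 hP hε)
  refine ⟨N, fun n hn => ?_⟩
  have hD := measurableSet_setOf_editDist_pName_lt hT.measurable hP n ε
  obtain ⟨y, hy⟩ := Measure.exists_prod_le_measure_preimage_prodMk μ μ hD
  refine ⟨pName T P n y, ?_⟩
  calc ENNReal.ofReal (1 - ε) = 1 - ENNReal.ofReal ε := by
        rw [ENNReal.ofReal_sub _ hε.le, ENNReal.ofReal_one]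
    _ ≤ 1 - μ.prod μ {p | editDist n (pName T P n p.1) (pName T P n p.2) < ε}ᶜ := by
        simpa only [Set.compl_ofPred, not_lt] using tsub_le_tsub_left (hN n hn) 1
    _ ≤ μ.prod μ {p | editDist n (pName T P n p.1) (pName T P n p.2) < ε} :=
        tsub_le_iff_right.2 (measure_univ.symm.trans_le (measure_univ_le_add_compl _))
    _ ≤ _ := hy

/-- if `ρ_FK` vanishes on a full-measure Borel set, then every finite
Borel partition satisfies Katok's criterion. -/
theorem katok_criterion_of_rhoFK_null {X : Type*} [MetricSpace X] [CompactSpace X] [Nonempty X]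
    (T : X → X) (hT : Continuous T) [MeasurableSpace X] [BorelSpace X]
    (μ : Measure X) [IsProbabilityMeasure μ] (hμ : Ergodic T μ)
    (M : Set X) (hM : MeasurableSet M) (hM1 : μ M = 1)
    (h0 : ∀ x ∈ M, ∀ y ∈ M, rhoFK T x y = 0)
    (k : ℕ) (hk : 1 ≤ k) (P : X → Fin k) (hP : Measurable P)
    (ε : ℝ) (hε : 0 < ε) :
    ∃ N : ℕ, ∀ n ≥ N, ∃ w : Fin n → Fin k,
      ENNReal.ofReal (1 - ε) ≤ μ {x : X | editDist n w (pName T P n x) < ε} :=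
  katok_criterion_of_rhoFK_null_general T hT μ hμ M hM1 h0 k P hP ε hε
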